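/- arXiv:math/0009233 — 2 statements merged into one kernel-verified Lean document; each statement's English description precedes it below -/
import Mathlib

section
/- Let R be a commutative ring and α, β ∈ R. In the cubic Hecke algebra H(Q,n) over R, for every j with 1 ≤ j ≤ n−2 one has the identity b_{j+1}² b_j² b_{j+1} = b_j b_{j+1}² b_j² + α·(b_{j+1} b_j² b_{j+1} − b_j b_{j+1}² b_j) + β·(b_j² b_{j+1} − b_j b_{j+1}²). -/
def braidRels (m : ℕ) : Set (FreeGroup (Fin m)) :=
  { r | (∃ i j : Fin m, (i : ℕ) + 1 < (j : ℕ) ∧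
          r = FreeGroup.of i * FreeGroup.of j * (FreeGroup.of i)⁻¹ * (FreeGroup.of j)⁻¹) ∨
        (∃ i j : Fin m, (j : ℕ) = (i : ℕ) + 1 ∧
          r = FreeGroup.of i * FreeGroup.of j * FreeGroup.of i *
              (FreeGroup.of j * FreeGroup.of i * FreeGroup.of j)⁻¹) }

abbrev BraidGroup (n : ℕ) := PresentedGroup (braidRels (n - 1))

def braidGen (n : ℕ) (i : Fin (n - 1)) : BraidGroup n := PresentedGroup.of i

theorem braid_mk_eq_one {m : ℕ} {r : FreeGroup (Fin m)} (hr : r ∈ braidRels m) :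
    PresentedGroup.mk (braidRels m) r = 1 :=
  (QuotientGroup.eq_one_iff r).mpr (Subgroup.subset_normalClosure hr)

noncomputable def braidIncl (n : ℕ) : BraidGroup n →* BraidGroup (n + 1) :=
  PresentedGroup.toGroup
    (f := fun i => braidGen (n + 1) (Fin.castLE (by omega : n - 1 ≤ n + 1 - 1) i))
    (by
      rintro r (⟨i, j, hij, rfl⟩ | ⟨i, j, hij, rfl⟩)
      · have h1 := braid_mk_eq_one (m := n + 1 - 1)
          (Or.inl ⟨Fin.castLE (by omega) i, Fin.castLE (by omega) j, by simpa using hij, rfl⟩)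
        simp only [map_mul, map_inv, FreeGroup.lift_apply_of] at h1 ⊢
        exact h1
      · have h1 := braid_mk_eq_one (m := n + 1 - 1)
          (Or.inr ⟨Fin.castLE (by omega) i, Fin.castLE (by omega) j, by simpa using hij, rfl⟩)
        simp only [map_mul, map_inv, FreeGroup.lift_apply_of] at h1 ⊢
        exact h1)

theorem braidIncl_gen (n : ℕ) (i : Fin (n - 1)) :
    braidIncl n (braidGen n i) = braidGen (n + 1) (Fin.castLE (by omega) i) :=
  PresentedGroup.toGroup.of _

variable (R : Type) [CommRing R]

noncomputable def gb (n : ℕ) (i : Fin (n - 1)) : MonoidAlgebra R (BraidGroup n) :=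
  MonoidAlgebra.of R (BraidGroup n) (braidGen n i)

inductive cubicRel (α β : R) (n : ℕ) :
    MonoidAlgebra R (BraidGroup n) → MonoidAlgebra R (BraidGroup n) → Prop
  | cube (i : Fin (n - 1)) :
      cubicRel α β n (gb R n i ^ 3) (α • gb R n i ^ 2 + β • gb R n i + 1)

abbrev CubicHecke (α β : R) (n : ℕ) := RingQuot (cubicRel R α β n)

noncomputable def hb (α β : R) (n : ℕ) (i : Fin (n - 1)) : CubicHecke R α β n :=
  RingQuot.mkAlgHom R (cubicRel R α β n) (gb R n i)

theorem mapDomain_gb (n : ℕ) (i : Fin (n - 1)) :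
    (MonoidAlgebra.mapDomainAlgHom R R (braidIncl n)) (gb R n i)
      = gb R (n + 1) (Fin.castLE (by omega) i) := by
  simp only [gb, MonoidAlgebra.mapDomainAlgHom_apply, MonoidAlgebra.of_apply,
    MonoidAlgebra.mapDomain_single, braidIncl_gen]

noncomputable def heckeIncl (α β : R) (n : ℕ) :
    CubicHecke R α β n →ₐ[R] CubicHecke R α β (n + 1) :=
  RingQuot.liftAlgHom R
    ⟨(RingQuot.mkAlgHom R (cubicRel R α β (n + 1))).comp
        (MonoidAlgebra.mapDomainAlgHom R R (braidIncl n)),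
      by
        rintro x y ⟨i⟩
        have h2 : (MonoidAlgebra.mapDomainAlgHom R R (braidIncl n)) (gb R n i ^ 3)
            = gb R (n + 1) (Fin.castLE (by omega) i) ^ 3 := by
          rw [map_pow, mapDomain_gb]
        have h3 : (MonoidAlgebra.mapDomainAlgHom R R (braidIncl n))
              (α • gb R n i ^ 2 + β • gb R n i + 1)
            = α • gb R (n + 1) (Fin.castLE (by omega) i) ^ 2
              + β • gb R (n + 1) (Fin.castLE (by omega) i) + 1 := by
          rw [map_add, map_add, map_smul, map_smul, map_pow, map_one, mapDomain_gb]
        simp only [AlgHom.comp_apply, h2, h3]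
        exact RingQuot.mkAlgHom_rel R (cubicRel.cube _)⟩

theorem heckeIncl_gen (α β : R) (n : ℕ) (i : Fin (n - 1)) :
    heckeIncl R α β n (hb R α β n i) = hb R α β (n + 1) (Fin.castLE (by omega) i) := by
  simp only [heckeIncl, hb, RingQuot.liftAlgHom_mkAlgHom_apply, AlgHom.comp_apply, mapDomain_gb]

noncomputable def R0elt {A : Type*} [Ring A] [Algebra R A] (α β : R) (x y : A) : A :=
  y * x ^ 2 * y
  + (β ^ 2 - α) • (x ^ 2 * y ^ 2 * x ^ 2)
  + (α ^ 2 - α * β ^ 2 - β) • (x * y ^ 2 * x ^ 2 + x ^ 2 * y ^ 2 * x)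
  + (α ^ 2 - α * β ^ 2) • (x ^ 2 * y * x ^ 2)
  + (1 + 2 * α * β + α ^ 2 * β ^ 2 - α ^ 3) • (x * y ^ 2 * x)
  + (1 + α * β + α ^ 2 * β ^ 2 - α ^ 3) • (x * y * x ^ 2 + x ^ 2 * y * x)
  + (1 + 2 * α * β - β ^ 3) • (y ^ 2 * x ^ 2 + x ^ 2 * y ^ 2)
  + (α * β ^ 3 - 2 * α - 2 * α ^ 2 * β) • (y * x ^ 2 + x ^ 2 * y)
  + (α * β ^ 3 - 2 * α - 2 * α ^ 2 * β + β ^ 2) • (y ^ 2 * x + x * y ^ 2)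
  + (α ^ 4 - α ^ 3 * β ^ 2 - 2 * α ^ 2 * β - 3 * α) • (x * y * x)
  + (2 * α ^ 3 * β + 3 * α ^ 2 - α ^ 2 * β ^ 3 - α * β ^ 2) • (y * x + x * y)
  + (β ^ 4 - 2 * β - 3 * α * β ^ 2 + α ^ 2) • (x ^ 2 + y ^ 2)
  + (1 + 4 * α * β + 3 * α ^ 2 * β ^ 2 - α ^ 3 - α * β ^ 4 - β ^ 3) • x
  + (1 + 3 * α * β + 3 * α ^ 2 * β ^ 2 - α ^ 3 - α * β ^ 4) • y
  + algebraMap R A (3 * β ^ 2 - β ^ 5 - 2 * α - 3 * α ^ 2 * β + 4 * α * β ^ 3)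

theorem map_R0elt {A B : Type*} [Ring A] [Ring B] [Algebra R A] [Algebra R B]
    (f : A →ₐ[R] B) (α β : R) (x y : A) :
    f (R0elt R α β x y) = R0elt R α β (f x) (f y) := by
  simp only [R0elt, map_add, map_mul, map_pow, map_smul, AlgHom.commutes]

inductive KRel (α β : R) (n : ℕ) : CubicHecke R α β n → CubicHecke R α β n → Prop
  | r0 (j : Fin (n - 1)) (h : (j : ℕ) + 1 < n - 1) :
      KRel α β n (R0elt R α β (hb R α β n j) (hb R α β n ⟨(j : ℕ) + 1, h⟩)) 0

abbrev KAlg (α β : R) (n : ℕ) := RingQuot (KRel R α β n)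

noncomputable def towerIncl (α β : R) (n : ℕ) :
    KAlg R α β n →ₐ[R] KAlg R α β (n + 1) :=
  RingQuot.liftAlgHom R
    ⟨(RingQuot.mkAlgHom R (KRel R α β (n + 1))).comp (heckeIncl R α β n),
      by
        rintro x y ⟨j, h⟩
        have hle : n - 1 ≤ n + 1 - 1 := by omega
        have hlt : ((Fin.castLE hle j : Fin (n + 1 - 1)) : ℕ) + 1 < n + 1 - 1 := by
          simp only [Fin.coe_castLE]; omega
        have e3 : Fin.castLE hle ⟨(j : ℕ) + 1, h⟩
            = (⟨((Fin.castLE hle j : Fin (n + 1 - 1)) : ℕ) + 1, hlt⟩ : Fin (n + 1 - 1)) := by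
          ext; simp
        rw [AlgHom.comp_apply, AlgHom.comp_apply, map_R0elt R (heckeIncl R α β n),
          heckeIncl_gen, heckeIncl_gen, e3, map_zero (heckeIncl R α β n)]
        exact RingQuot.mkAlgHom_rel R (KRel.r0 (Fin.castLE hle j) hlt)⟩

/-- The class of the inverse `b_{i+1}⁻¹` in the cubic Hecke algebra. -/
noncomputable def hbInv (α β : R) (n : ℕ) (i : Fin (n - 1)) : CubicHecke R α β n :=
  RingQuot.mkAlgHom R (cubicRel R α β n)
    (MonoidAlgebra.of R (BraidGroup n) (braidGen n i)⁻¹)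

/-- The class of the generator `b_{i+1}` in `K_n(α,β)`. -/
noncomputable def kb (α β : R) (n : ℕ) (i : Fin (n - 1)) : KAlg R α β n :=
  RingQuot.mkAlgHom R (KRel R α β n) (hb R α β n i)

/-- The class of `b_{i+1}⁻¹` in `K_n(α,β)`. -/
noncomputable def kbInv (α β : R) (n : ℕ) (i : Fin (n - 1)) : KAlg R α β n :=
  RingQuot.mkAlgHom R (KRel R α β n) (hbInv R α β n i)

/-- The iterated tower map `K_n(α,β) → K_{n+k}(α,β)`. -/
noncomputable def towerInclMany (α β : R) (n : ℕ) :
    (k : ℕ) → (KAlg R α β n →ₐ[R] KAlg R α β (n + k))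
  | 0 => AlgHom.id R _
  | k + 1 => (towerIncl R α β (n + k)).comp (towerInclMany α β n k)

/-- The class of the generator `b_n` in `K_{n+1}(α,β)` (for `n ≥ 1`). -/
noncomputable def lastGen (α β : R) (n : ℕ) (h : 1 ≤ n) : KAlg R α β (n + 1) :=
  kb R α β (n + 1) ⟨n - 1, by omega⟩

/-- The class of `b_n⁻¹` in `K_{n+1}(α,β)` (for `n ≥ 1`). -/
noncomputable def lastGenInv (α β : R) (n : ℕ) (h : 1 ≤ n) : KAlg R α β (n + 1) :=
  kbInv R α β (n + 1) ⟨n - 1, by omega⟩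

/-- An admissible functional with parameters `(z, z̄)` on the tower of the algebras
`K_n(α,β)`: a compatible family of `R`-linear functionals satisfying the Markov-type
conditions for the last generator and its inverse. -/
structure AdmissibleFunctional (α β z zbar : R) : Type _ where
  T : ∀ n : ℕ, KAlg R α β n →ₗ[R] R
  compat : ∀ (n : ℕ) (x : KAlg R α β n), T (n + 1) (towerIncl R α β n x) = T n x
  cond_z : ∀ (n : ℕ) (h : 1 ≤ n) (x y : KAlg R α β n),
      T (n + 1) (towerIncl R α β n x * lastGen R α β n h * towerIncl R α β n y)
        = z * T n (x * y)
  cond_zbar : ∀ (n : ℕ) (h : 1 ≤ n) (x y : KAlg R α β n),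
      T (n + 1) (towerIncl R α β n x * lastGenInv R α β n h * towerIncl R α β n y)
        = zbar * T n (x * y)

/-- A Markov trace is an admissible functional each of whose components is a trace. -/
def AdmissibleFunctional.IsMarkov {α β z zbar : R}
    (T : AdmissibleFunctional R α β z zbar) : Prop :=
  ∀ (n : ℕ) (a b : KAlg R α β n), T.T n (a * b) = T.T n (b * a)

/-- A normalized functional takes the value `1` on the unit of `K₁(α,β)`. -/
def AdmissibleFunctional.IsNormalized {α β z zbar : R}
    (T : AdmissibleFunctional R α β z zbar) : Prop :=
  T.T 1 1 = 1

/-! Write `x = b_j`, `y = b_{j+1}`. The cubic relation gives `x (x² - αx - β) = 1`, so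
`y²x²y = (y²x²y·x)(x² - αx - β)`. The braid relation turns `y²x²y·x` into `xyx³y`; expanding
`x³` by the cubic relation and moving the trailing `x` back to the right end with the braid relation
(`xyx²y = yx²y·x`, `xyxy = x²y·x`) lets it cancel against `x² - αx - β`. -/

section BraidRelation

variable {M : Type*} [Monoid M] {x y : M}

theorem mul_mul_mul_of_braid (h : x * y * x = y * x * y) (t : M) :
    x * (y * (x * t)) = y * (x * (y * t)) := by
  simp only [← mul_assoc, h]

theorem sq_mul_sq_mul_mul_of_braid (h : x * y * x = y * x * y) :
    y ^ 2 * x ^ 2 * y * x = x * y * x ^ 3 * y := by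
  have h' := mul_mul_mul_of_braid h
  simp only [pow_succ, pow_zero, one_mul, mul_assoc] at h ⊢
  rw [h, ← h', ← h']

theorem mul_mul_sq_mul_of_braid (h : x * y * x = y * x * y) :
    x * y * x ^ 2 * y = y * x ^ 2 * y * x := by
  have h' := mul_mul_mul_of_braid h
  simp only [pow_succ, pow_zero, one_mul, mul_assoc] at h ⊢
  rw [h', ← h]

theorem mul_mul_mul_mul_of_braid (h : x * y * x = y * x * y) :
    x * y * x * y = x ^ 2 * y * x := by
  simp only [pow_two, mul_assoc] at h ⊢
  rw [← h]

end BraidRelation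

theorem cubic_braid_identity {A : Type*} [Ring A] [Algebra R A] (α β : R) {x y : A}
    (hx : x ^ 3 = α • x ^ 2 + β • x + 1) (h : x * y * x = y * x * y) :
    y ^ 2 * x ^ 2 * y = x * y ^ 2 * x ^ 2 + α • (y * x ^ 2 * y - x * y ^ 2 * x)
      + β • (x ^ 2 * y - x * y ^ 2) := by
  set u := x ^ 2 - α • x - β • 1 with hu
  have hxu : x * u = 1 := by
    rw [hu, mul_sub, mul_sub, mul_smul_comm, mul_smul_comm, ← pow_succ', mul_one, ← pow_two, hx]
    abel
  calc y ^ 2 * x ^ 2 * y = y ^ 2 * x ^ 2 * y * x * u := by rw [mul_assoc _ x, hxu, mul_one]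
    _ = x * y * x ^ 3 * y * u := by rw [sq_mul_sq_mul_mul_of_braid h]
    _ = (α • (x * y * x ^ 2 * y) + β • (x * y * x * y) + x * y ^ 2) * u := by
      rw [hx]
      simp only [mul_add, add_mul, mul_smul_comm, smul_mul_assoc, mul_one, pow_two, mul_assoc]
    _ = (α • (y * x ^ 2 * y * x) + β • (x ^ 2 * y * x) + x * y ^ 2) * u := by
      rw [mul_mul_sq_mul_of_braid h, mul_mul_mul_mul_of_braid h]
    _ = α • (y * x ^ 2 * y) + β • (x ^ 2 * y) + x * y ^ 2 * u := by
      simp only [add_mul, smul_mul_assoc, mul_assoc _ x u, hxu, mul_one]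
    _ = _ := by
      rw [hu]; simp only [mul_sub, mul_smul_comm, mul_one, smul_sub]; abel

theorem braidGen_braid (n : ℕ) (j : Fin (n - 1)) (h : (j : ℕ) + 1 < n - 1) :
    braidGen n j * braidGen n ⟨(j : ℕ) + 1, h⟩ * braidGen n j
      = braidGen n ⟨(j : ℕ) + 1, h⟩ * braidGen n j * braidGen n ⟨(j : ℕ) + 1, h⟩ := by
  have hrel := braid_mk_eq_one (Or.inr ⟨j, ⟨(j : ℕ) + 1, h⟩, rfl, rfl⟩)
  rwa [map_mul, map_inv, mul_inv_eq_one] at hrel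

theorem hb_braid (α β : R) (n : ℕ) (j : Fin (n - 1)) (h : (j : ℕ) + 1 < n - 1) :
    hb R α β n j * hb R α β n ⟨(j : ℕ) + 1, h⟩ * hb R α β n j
      = hb R α β n ⟨(j : ℕ) + 1, h⟩ * hb R α β n j * hb R α β n ⟨(j : ℕ) + 1, h⟩ := by
  simp only [hb, gb, ← map_mul, braidGen_braid n j h]

theorem hb_pow_three (α β : R) (n : ℕ) (i : Fin (n - 1)) :
    hb R α β n i ^ 3 = α • hb R α β n i ^ 2 + β • hb R α β n i + 1 := by
  simpa only [hb, map_add, map_smul, map_pow, map_one] using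
    RingQuot.mkAlgHom_rel R (cubicRel.cube (α := α) (β := β) i)

/-- In the cubic Hecke algebra `H(Q_{α,β},n)` one has
`b_{j+1}² b_j² b_{j+1} = b_j b_{j+1}² b_j² + α(b_{j+1} b_j² b_{j+1} − b_j b_{j+1}² b_j)
 + β(b_j² b_{j+1} − b_j b_{j+1}²)`. -/
theorem statement_2 (R : Type) [CommRing R] (α β : R) (n : ℕ)
    (j : Fin (n - 1)) (h : (j : ℕ) + 1 < n - 1) :
    hb R α β n ⟨(j : ℕ) + 1, h⟩ ^ 2 * hb R α β n j ^ 2 * hb R α β n ⟨(j : ℕ) + 1, h⟩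
      = hb R α β n j * hb R α β n ⟨(j : ℕ) + 1, h⟩ ^ 2 * hb R α β n j ^ 2
        + α • (hb R α β n ⟨(j : ℕ) + 1, h⟩ * hb R α β n j ^ 2 * hb R α β n ⟨(j : ℕ) + 1, h⟩
            - hb R α β n j * hb R α β n ⟨(j : ℕ) + 1, h⟩ ^ 2 * hb R α β n j)
        + β • (hb R α β n j ^ 2 * hb R α β n ⟨(j : ℕ) + 1, h⟩
            - hb R α β n j * hb R α β n ⟨(j : ℕ) + 1, h⟩ ^ 2) :=
  cubic_braid_identity R α β (hb_pow_three R α β n j) (hb_braid R α β n j h)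
end

section
/- Let R be a commutative ring and α, β ∈ R. In the cubic Hecke algebra H(Q,3) over R, set R₁ := b₁·R₀ and R₂ := b₁·R₁. Then: b₁R₀ = R₀b₁ = b₂R₀ = R₀b₂ = R₁; b₁R₁ = R₁b₁ = b₂R₁ = R₁b₂ = R₂; and b₁R₂ = R₂b₁ = b₂R₂ = R₂b₂ = R₀ + β·R₁ + α·R₂. -/
variable (R : Type) [CommRing R]

/-!
Everything rests on two identities in the free algebra on `x = b₁`, `y = b₂`: `R₀x - xR₀` and
`yR₀ - xR₀` lie in the ideal generated by the cubic relations and the braid relation (explicit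
certificates). Since `R₀` is a palindrome, reversing words turns `yR₀ = xR₀` into `R₀y = R₀x`.
Hence `x` and `y` act on `R₀` from either side as left multiplication by `x`; this property passes
to `xR₀` and `x²R₀`, and the cubic relation gives `x³R₀ = R₀ + β·xR₀ + α·x²R₀`.
-/

section

variable {R} {A : Type*} [Ring A] [Algebra R A] {α β : R} {x y : A}

theorem R0elt_mul_sub_mul_R0elt_eq {cx b : A} (hcx : cx = x ^ 3 - α • x ^ 2 - β • x - 1)
    (hb : b = y * x * y - x * y * x) :
    R0elt R α β x y * x - x * R0elt R α β x y =
    b*x*y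
    + (2*α - α*β^3 + 2*α^2*β) • cx*y
    + (-1 - α*β - α^2*β^2 + α^3) • cx*y*x
    + (α*β^2 - α^2) • cx*y*x*x
    + (-1 + β^3 - 2*α*β) • cx*y*y
    + (β + α*β^2 - α^2) • cx*y*y*x
    + (-β^2 + α) • cx*y*y*x*x
    + (-α*β^2 + α^2) • x*x*y*cx
    + (β^2 - α) • x*x*y*y*cx
    + (1 + α*β + α^2*β^2 - α^3) • x*y*cx
    + (-β - α*β^2 + α^2) • x*y*y*cx
    + (-2*α + α*β^3 - 2*α^2*β) • y*cx
    - y*x*b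
    + (1 - β^3 + 2*α*β) • y*y*cx := by
  subst hcx hb
  simp only [R0elt, Algebra.algebraMap_eq_smul_one, mul_add, add_mul, mul_sub, sub_mul, smul_add,
    smul_sub, smul_smul, smul_mul_assoc, mul_smul_comm, mul_assoc, mul_one, one_mul, pow_succ,
    pow_zero]
  match_scalars <;> ring

set_option maxHeartbeats 1000000 in
theorem mul_R0elt_sub_mul_R0elt_eq {cx cy b : A} (hcx : cx = x ^ 3 - α • x ^ 2 - β • x - 1)
    (hcy : cy = y ^ 3 - α • y ^ 2 - β • y - 1) (hb : b = y * x * y - x * y * x) :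
    y * R0elt R α β x y - x * R0elt R α β x y =
    (-α*β^2 + 3*α^2 - α^2*β^3 + 2*α^3*β) • b
    + (-β^2 + β^5 - 3*α - 2*α*β^3 - 2*α^2*β - α^3*β^2 + α^4) • b*x
    + (1 + β^3 + α*β + α*β^4 - α^3) • b*x*x
    + (-β^4 + α*β^2) • b*x*x*x
    - β • b*x*x*y
    + (1 - α*β + α*β^4 - 2*α^2*β^2) • b*x*y
    + (α*β^2 + α^2*β^3 - α^3*β) • b*x*y*x
    + (-α*β^3 + α^2*β) • b*x*y*x*x
    - α • b*x*y*x*y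
    + b*x*y*x*y*x
    + (β - β^4 + 2*α*β^2) • b*x*y*y
    + (-β^2 - α*β^3 + α^2*β) • b*x*y*y*x
    + (β^3 - α*β) • b*x*y*y*x*x
    + (β^2 - 2*α + α*β^3 - 2*α^2*β) • b*y
    + (1 + 2*α*β + α^2*β^2 - α^3) • b*y*x
    + (-β - α*β^2 + α^2) • b*y*x*x
    + (2*β - β^4 + 3*α*β^2 - α^2) • cx
    + (2*α - α*β^3 + 2*α^2*β) • cx*y
    + (-1 - α*β - α^2*β^2 + α^3) • cx*y*x
    + (β - β^4 + 3*α*β^2 - α^2) • cx*y*x*x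
    + (-β^2 - α*β^3 + α^2*β) • cx*y*x*x*x
    + (β^3 - α*β) • cx*y*x*x*x*x
    + (2*α - α*β^3 + 2*α^2*β) • cx*y*x*x*y
    + (-α*β - α^2*β^2 + α^3) • cx*y*x*x*y*x
    + (α*β^2 - α^2) • cx*y*x*x*y*x*x
    + (-1 + β^3 - 2*α*β) • cx*y*x*x*y*y
    + (β + α*β^2 - α^2) • cx*y*x*x*y*y*x
    + (-β^2 + α) • cx*y*x*x*y*y*x*x
    + (-1 + β^3 - 2*α*β) • cx*y*y
    + (β + α*β^2 - α^2) • cx*y*y*x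
    + (-β^2 + α) • cx*y*y*x*x
    + (-2*β + β^4 - 3*α*β^2 + α^2) • cy
    + (β^2 - 2*α + α*β^3 - 2*α^2*β) • cy*x
    + (1 - β^3 + 2*α*β) • cy*x*x
    + (-2*α + α*β^3 - 2*α^2*β) • x*b
    + (1 + α*β^4 - α^2*β^2 - α^3) • x*b*x
    + (α^2 + α^2*β^3 - α^3*β) • x*b*x*x
    + (-α*β^3 + α^2*β) • x*b*x*x*x
    + (-2*α^2 + α^2*β^3 - 2*α^3*β) • x*b*x*y
    + (α + α^2*β + α^3*β^2 - α^4) • x*b*x*y*x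
    + (-α^2*β^2 + α^3) • x*b*x*y*x*x
    + (α - α*β^3 + 2*α^2*β) • x*b*x*y*y
    + (-α*β - α^2*β^2 + α^3) • x*b*x*y*y*x
    + (α*β^2 - α^2) • x*b*x*y*y*x*x
    + (β - β^4 + 2*α*β^2) • x*x*b*x
    + (-β^2 - α*β^3 + α^2*β) • x*x*b*x*x
    + (β^3 - α*β) • x*x*b*x*x*x
    + (2*α - α*β^3 + 2*α^2*β) • x*x*b*x*y
    + (-α*β - α^2*β^2 + α^3) • x*x*b*x*y*x
    + (α*β^2 - α^2) • x*x*b*x*y*x*x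
    + (-1 + β^3 - 2*α*β) • x*x*b*x*y*y
    + (β + α*β^2 - α^2) • x*x*b*x*y*y*x
    + (-β^2 + α) • x*x*b*x*y*y*x*x
    + (-α*β^2 + α^2) • x*x*y*cx
    + (1 - β^3 + 2*α*β) • x*x*y*cx*y*x
    + (-β - α*β^2 + α^2) • x*x*y*cx*y*x*x
    + (β^2 - α) • x*x*y*cx*y*x*x*x
    + (-2*α + α*β^3 - 2*α^2*β) • x*x*y*x*b
    + (α*β + α^2*β^2 - α^3) • x*x*y*x*b*x
    + (-α*β^2 + α^2) • x*x*y*x*b*x*x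
    + (1 - β^3 + 2*α*β) • x*x*y*x*b*y
    + (-β - α*β^2 + α^2) • x*x*y*x*b*y*x
    + (β^2 - α) • x*x*y*x*b*y*x*x
    + (1 - β^3 + 2*α*β) • x*x*y*x*x*b
    + (-β - α*β^2 + α^2) • x*x*y*x*x*b*x
    + (β^2 - α) • x*x*y*x*x*b*x*x
    + (β^2 - α) • x*x*y*y*cx
    + (1 + α*β + α^2*β^2 - α^3) • x*y*cx
    - β • x*y*cx*y
    + (-2*α + α*β^3 - 2*α^2*β) • x*y*cx*y*x
    + (1 + α*β + α^2*β^2 - α^3) • x*y*cx*y*x*x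
    + (-α*β^2 + α^2) • x*y*cx*y*x*x*x
    + (2*α^2 - α^2*β^3 + 2*α^3*β) • x*y*x*b
    + (-α - α^2*β - α^3*β^2 + α^4) • x*y*x*b*x
    + (α^2*β^2 - α^3) • x*y*x*b*x*x
    + (-α + α*β^3 - 2*α^2*β) • x*y*x*b*y
    + (α*β + α^2*β^2 - α^3) • x*y*x*b*y*x
    + (-α*β^2 + α^2) • x*y*x*b*y*x*x
    + (-2*α + α*β^3 - 2*α^2*β) • x*y*x*x*b
    + (1 + α*β + α^2*β^2 - α^3) • x*y*x*x*b*x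
    + (-α*β^2 + α^2) • x*y*x*x*b*x*x
    + (-α*β^2 + α^2) • x*y*y*cx
    - β^2 • y*cx
    + (β^3 - α*β) • y*cx*x
    + (-β + β^4 - 2*α*β^2) • y*cx*y*x
    + (β^2 + α*β^3 - α^2*β) • y*cx*y*x*x
    + (-β^3 + α*β) • y*cx*y*x*x*x
    - y*cx*y*x*x*y
    + (-1 + α*β - α*β^4 + 2*α^2*β^2) • y*x*b
    + (-α*β^2 - α^2*β^3 + α^3*β) • y*x*b*x
    + (α*β^3 - α^2*β) • y*x*b*x*x
    + α • y*x*b*x*y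
    - y*x*b*x*y*x
    + (-β + β^4 - 2*α*β^2) • y*x*b*y
    + (β^2 + α*β^3 - α^2*β) • y*x*b*y*x
    + (-β^3 + α*β) • y*x*b*y*x*x
    + (-β + β^4 - 2*α*β^2) • y*x*x*b
    + (β^2 + α*β^3 - α^2*β) • y*x*x*b*x
    + (-β^3 + α*β) • y*x*x*b*x*x
    - y*x*x*b*x*y
    + y*x*x*y*x*b
    + (-β^3 + α*β) • y*y*cx := by
  subst hcx hcy hb
  simp only [R0elt, Algebra.algebraMap_eq_smul_one, mul_add, add_mul, mul_sub, sub_mul, smul_add,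
    smul_sub, smul_smul, smul_mul_assoc, mul_smul_comm, mul_assoc, mul_one, one_mul, pow_succ,
    pow_zero]
  match_scalars <;> ring

theorem R0elt_mul_comm (hx : x ^ 3 = α • x ^ 2 + β • x + 1) (hxy : x * y * x = y * x * y) :
    R0elt R α β x y * x = x * R0elt R α β x y := by
  have h := R0elt_mul_sub_mul_R0elt_eq (α := α) (β := β) (x := x) (y := y) (cx := 0) (b := 0)
    (by rw [hx]; abel) (by rw [hxy, sub_self])
  simpa [sub_eq_zero] using h

theorem mul_R0elt_eq (hx : x ^ 3 = α • x ^ 2 + β • x + 1) (hy : y ^ 3 = α • y ^ 2 + β • y + 1)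
    (hxy : x * y * x = y * x * y) : y * R0elt R α β x y = x * R0elt R α β x y := by
  have h := mul_R0elt_sub_mul_R0elt_eq (α := α) (β := β) (x := x) (y := y) (cx := 0) (cy := 0)
    (b := 0) (by rw [hx]; abel) (by rw [hy]; abel) (by rw [hxy, sub_self])
  simpa [sub_eq_zero] using h

theorem op_R0elt (x y : A) :
    MulOpposite.op (R0elt R α β x y) = R0elt R α β (MulOpposite.op x) (MulOpposite.op y) := by
  apply MulOpposite.unop_injective
  simp only [R0elt, MulOpposite.unop_add, MulOpposite.unop_smul, MulOpposite.unop_mul,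
    MulOpposite.unop_pow, MulOpposite.unop_op, MulOpposite.algebraMap_apply, mul_assoc, smul_add]
  abel

-- `R₀` is a palindrome, so `mul_R0elt_eq` in `Aᵐᵒᵖ` yields the right-handed version.
theorem R0elt_mul_eq (hx : x ^ 3 = α • x ^ 2 + β • x + 1) (hy : y ^ 3 = α • y ^ 2 + β • y + 1)
    (hxy : x * y * x = y * x * y) : R0elt R α β x y * y = x * R0elt R α β x y := by
  have hx' : MulOpposite.op x ^ 3 = α • MulOpposite.op x ^ 2 + β • MulOpposite.op x + 1 := by
    simpa using congrArg MulOpposite.op hx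
  have hy' : MulOpposite.op y ^ 3 = α • MulOpposite.op y ^ 2 + β • MulOpposite.op y + 1 := by
    simpa using congrArg MulOpposite.op hy
  have hxy' : MulOpposite.op x * MulOpposite.op y * MulOpposite.op x
      = MulOpposite.op y * MulOpposite.op x * MulOpposite.op y := by
    simpa [mul_assoc] using congrArg MulOpposite.op hxy
  have h := mul_R0elt_eq hx' hy' hxy'
  rw [← op_R0elt, ← MulOpposite.op_mul, ← MulOpposite.op_mul] at h
  rw [MulOpposite.op_injective h, R0elt_mul_comm hx hxy]

def ActsAlike (x y r : A) : Prop :=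
  y * r = x * r ∧ r * x = x * r ∧ r * y = x * r

theorem ActsAlike.mul_left {r : A} (h : ActsAlike x y r) : ActsAlike x y (x * r) := by
  obtain ⟨hy, hx, hy'⟩ := h
  refine ⟨?_, ?_, ?_⟩
  · rw [← hx, ← mul_assoc, hy, mul_assoc, hx]
  · rw [mul_assoc, hx]
  · rw [mul_assoc, hy']

theorem actsAlike_R0elt (hx : x ^ 3 = α • x ^ 2 + β • x + 1)
    (hy : y ^ 3 = α • y ^ 2 + β • y + 1) (hxy : x * y * x = y * x * y) :
    ActsAlike x y (R0elt R α β x y) :=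
  ⟨mul_R0elt_eq hx hy hxy, R0elt_mul_comm hx hxy, R0elt_mul_eq hx hy hxy⟩

theorem mul_mul_mul_eq_of_pow_three (hx : x ^ 3 = α • x ^ 2 + β • x + 1) (r : A) :
    x * (x * (x * r)) = r + β • (x * r) + α • (x * (x * r)) := by
  rw [← mul_assoc, ← mul_assoc, ← pow_three', hx]
  simp only [add_mul, smul_mul_assoc, one_mul, sq, mul_assoc]
  abel

end

theorem braidGen_three_braid :
    braidGen 3 0 * braidGen 3 1 * braidGen 3 0 = braidGen 3 1 * braidGen 3 0 * braidGen 3 1 := by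
  have h := braid_mk_eq_one (m := 3 - 1) (Or.inr ⟨0, 1, rfl, rfl⟩)
  simp only [map_mul, map_inv] at h
  exact mul_inv_eq_one.mp h

theorem hb_three_braid (α β : R) :
    hb R α β 3 0 * hb R α β 3 1 * hb R α β 3 0 = hb R α β 3 1 * hb R α β 3 0 * hb R α β 3 1 := by
  simp only [hb, gb, ← map_mul, braidGen_three_braid]

/-- In `H(Q_{α,β},3)`, with `R₁ := b₁·R₀` and `R₂ := b₁·R₁`:
`b₁R₀ = R₀b₁ = b₂R₀ = R₀b₂ = R₁`, `b₁R₁ = R₁b₁ = b₂R₁ = R₁b₂ = R₂` and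
`b₁R₂ = R₂b₁ = b₂R₂ = R₂b₂ = R₀ + β·R₁ + α·R₂`. -/
theorem statement_4 (R : Type) [CommRing R] (α β : R) :
    ∀ x y r0 r1 r2 : CubicHecke R α β 3,
      x = hb R α β 3 ⟨0, by omega⟩ → y = hb R α β 3 ⟨1, by omega⟩ →
      r0 = R0elt R α β x y → r1 = x * r0 → r2 = x * r1 →
      (x * r0 = r1 ∧ r0 * x = r1 ∧ y * r0 = r1 ∧ r0 * y = r1) ∧
      (x * r1 = r2 ∧ r1 * x = r2 ∧ y * r1 = r2 ∧ r1 * y = r2) ∧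
      (x * r2 = r0 + β • r1 + α • r2 ∧ r2 * x = r0 + β • r1 + α • r2 ∧
        y * r2 = r0 + β • r1 + α • r2 ∧ r2 * y = r0 + β • r1 + α • r2) := by
  intro x y r0 r1 r2 hx hy h0 h1 h2
  have hx3 : x ^ 3 = α • x ^ 2 + β • x + 1 := hx ▸ hb_pow_three R α β 3 _
  have hy3 : y ^ 3 = α • y ^ 2 + β • y + 1 := hy ▸ hb_pow_three R α β 3 _
  have hxy : x * y * x = y * x * y := hx ▸ hy ▸ hb_three_braid R α β
  have a0 : ActsAlike x y r0 := h0 ▸ actsAlike_R0elt hx3 hy3 hxy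
  have a1 : ActsAlike x y r1 := h1 ▸ a0.mul_left
  have a2 : ActsAlike x y r2 := h2 ▸ a1.mul_left
  have hcube : x * r2 = r0 + β • r1 + α • r2 := by
    rw [h2, h1]; exact mul_mul_mul_eq_of_pow_three hx3 r0
  exact ⟨⟨h1.symm, a0.2.1.trans h1.symm, a0.1.trans h1.symm, a0.2.2.trans h1.symm⟩,
    ⟨h2.symm, a1.2.1.trans h2.symm, a1.1.trans h2.symm, a1.2.2.trans h2.symm⟩,
    ⟨hcube, a2.2.1.trans hcube, a2.1.trans hcube, a2.2.2.trans hcube⟩⟩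
end
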